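/- arXiv:math/0402317 — 2 statements merged into one kernel-verified Lean document; each statement's English description precedes it below -/
import Mathlib

section
/- Fourier inversion for nice functions: if f : ℝⁿ → ℂ is a nice function, then for every x ∈ ℝⁿ, f(x) = ∫_{ℝⁿ} f̂(ξ) exp(2πi ξ·x) dξ; that is, the inverse transform of the Fourier transform of f recovers f. -/
open MeasureTheory Real
open scoped RealInnerProductSpace

noncomputable section

/-- The Fourier transform of `f : ℝⁿ → ℂ`:
`f̂ ξ = ∫ x, f x · exp (−2πi x·ξ)`. -/
def FT {n : ℕ} (f : EuclideanSpace ℝ (Fin n) → ℂ) (ξ : EuclideanSpace ℝ (Fin n)) : ℂ :=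
  ∫ x : EuclideanSpace ℝ (Fin n),
    f x * Complex.exp (-2 * (Real.pi : ℂ) * Complex.I * (⟪x, ξ⟫ : ℂ))

/-- `A : ℝⁿ → ℝⁿ` linear is symmetric and positive-definite. -/
def IsPosDefSymm {n : ℕ}
    (A : EuclideanSpace ℝ (Fin n) →ₗ[ℝ] EuclideanSpace ℝ (Fin n)) : Prop :=
  (∀ x y, ⟪A x, y⟫ = ⟪x, A y⟫) ∧ (∀ x, x ≠ 0 → 0 < ⟪A x, x⟫)

/-- The building block `x ↦ x^α · exp (−⟨A x, x⟩ + b·x)`. -/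
def buildingBlock {n : ℕ} (α : Fin n → ℕ)
    (A : EuclideanSpace ℝ (Fin n) →ₗ[ℝ] EuclideanSpace ℝ (Fin n)) (b : Fin n → ℂ) :
    EuclideanSpace ℝ (Fin n) → ℂ :=
  fun x => (∏ j, (x j : ℂ) ^ α j) *
    Complex.exp (-(((⟪A x, x⟫ : ℝ)) : ℂ) + ∑ j, b j * (x j : ℂ))

/-- A function `f : ℝⁿ → ℂ` is nice if it is a complex linear combination of
building blocks `x ↦ x^α · exp (−⟨A x, x⟩ + b·x)` with `A` positive-definite
symmetric. -/
def IsNice {n : ℕ} (f : EuclideanSpace ℝ (Fin n) → ℂ) : Prop :=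
  f ∈ Submodule.span ℂ {g : EuclideanSpace ℝ (Fin n) → ℂ |
    ∃ α A b, IsPosDefSymm A ∧ g = buildingBlock α A b}

/-- The partial derivative in the `j`-th coordinate direction. -/
def pderivCoord {n : ℕ} (j : Fin n) (f : EuclideanSpace ℝ (Fin n) → ℂ) :
    EuclideanSpace ℝ (Fin n) → ℂ :=
  fun x => fderiv ℝ f x (EuclideanSpace.single j 1)

/-- The mixed partial derivative `∂^{δ(α)}/∂x^α`, with `α j` derivatives in
the `j`-th coordinate direction. -/
def mixedDeriv {n : ℕ} (α : Fin n → ℕ) (f : EuclideanSpace ℝ (Fin n) → ℂ) :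
    EuclideanSpace ℝ (Fin n) → ℂ :=
  (List.finRange n).foldr (fun j g => (pderivCoord j)^[α j] g) f


/-- The inverse Fourier transform `φ̌ x = ∫ ξ, φ ξ · exp (2πi ξ·x)`. -/
def invFT {n : ℕ} (φ : EuclideanSpace ℝ (Fin n) → ℂ) (x : EuclideanSpace ℝ (Fin n)) : ℂ :=
  ∫ ξ : EuclideanSpace ℝ (Fin n),
    φ ξ * Complex.exp (2 * (Real.pi : ℂ) * Complex.I * (⟪ξ, x⟫ : ℂ))

end

/-!
A building block is a monomial times `exp ∘ q`, where `q x = -⟪A x, x⟫ + b·x` has temperate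
growth and, `A` being positive definite, `Re q x ≤ C - c‖x‖²` with `c > 0`. By Faà di Bruno the
derivatives of `exp ∘ q` are bounded by polynomials times `exp (Re q)`, so the Gaussian decay
makes `exp ∘ q` a Schwartz function; multiplying by a monomial and taking linear combinations
stays in Schwartz space. Nice functions are therefore Schwartz, and Fourier inversion holds for
Schwartz functions.
-/

open Complex
open scoped SchwartzMap FourierTransform ContDiff

section SchwartzExp

variable {E : Type*} [NormedAddCommGroup E] [NormedSpace ℝ E]

theorem norm_iteratedFDeriv_cexp_le (m : ℕ) (z : ℂ) :
    ‖iteratedFDeriv ℝ m cexp z‖ ≤ ‖cexp z‖ := by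
  rw [← (Complex.contDiff_exp (𝕜 := ℂ) (n := m)).contDiffAt.restrictScalars_iteratedFDeriv
      (𝕜 := ℝ), Function.comp_apply, ContinuousMultilinearMap.norm_restrictScalars,
    norm_iteratedFDeriv_eq_norm_iteratedDeriv, iteratedDeriv_eq_iterate, Complex.iter_deriv_exp]

theorem Function.HasTemperateGrowth.norm_iteratedFDeriv_cexp_comp_le {g : E → ℂ}
    (hg : g.HasTemperateGrowth) (m : ℕ) :
    ∃ (k : ℕ) (C : ℝ), ∀ x, ‖iteratedFDeriv ℝ m (fun x ↦ cexp (g x)) x‖ ≤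
      C * (1 + ‖x‖) ^ k * Real.exp (g x).re := by
  obtain ⟨k, C, -, hC⟩ := hg.norm_iteratedFDeriv_le_uniform m
  refine ⟨k * m, m.factorial * max C 1 ^ m, fun x ↦ ?_⟩
  have hD : 1 ≤ max C 1 * (1 + ‖x‖) ^ k :=
    one_le_mul_of_one_le_of_one_le (le_max_right _ _) (one_le_pow₀ (by simp))
  calc ‖iteratedFDeriv ℝ m (cexp ∘ g) x‖
      ≤ m.factorial * ‖cexp (g x)‖ * (max C 1 * (1 + ‖x‖) ^ k) ^ m := by
        refine norm_iteratedFDeriv_comp_le (Complex.contDiff_exp (𝕜 := ℝ)) hg.1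
          (N := ∞) (mod_cast le_top) x (fun i _ ↦ norm_iteratedFDeriv_cexp_le i (g x))
          (fun i hi₁ hi ↦ ?_)
        calc ‖iteratedFDeriv ℝ i g x‖ ≤ C * (1 + ‖x‖) ^ k := hC i hi x
          _ ≤ max C 1 * (1 + ‖x‖) ^ k := by gcongr; exact le_max_left _ _
          _ ≤ (max C 1 * (1 + ‖x‖) ^ k) ^ i := le_self_pow₀ hD (by omega)
    _ = m.factorial * max C 1 ^ m * (1 + ‖x‖) ^ (k * m) * Real.exp (g x).re := by
        rw [norm_exp, mul_pow, ← pow_mul]; ring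

theorem one_add_pow_mul_exp_neg_mul_sq_le (N : ℕ) {c s : ℝ} (hc : 0 < c) (hs : 0 ≤ s) :
    (1 + s) ^ N * Real.exp (-(c * s ^ 2)) ≤ Real.exp (N ^ 2 / (4 * c)) := by
  calc (1 + s) ^ N * Real.exp (-(c * s ^ 2))
      ≤ Real.exp s ^ N * Real.exp (-(c * s ^ 2)) := by
        gcongr
        linarith [Real.add_one_le_exp s]
    _ = Real.exp (N * s - c * s ^ 2) := by
        rw [← Real.exp_nat_mul, ← Real.exp_add]; ring_nf
    _ ≤ Real.exp (N ^ 2 / (4 * c)) := by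
        rw [Real.exp_le_exp, le_div_iff₀ (by positivity)]
        nlinarith [sq_nonneg (2 * c * s - N)]

theorem exists_schwartzMap_eq_cexp_comp {g : E → ℂ} (hg : g.HasTemperateGrowth) {C c : ℝ}
    (hc : 0 < c) (hre : ∀ x, (g x).re ≤ C - c * ‖x‖ ^ 2) :
    ∃ f : 𝓢(E, ℂ), ⇑f = fun x ↦ cexp (g x) := by
  refine ⟨⟨fun x ↦ cexp (g x), (Complex.contDiff_exp (𝕜 := ℝ)).comp hg.1, fun k m ↦ ?_⟩, rfl⟩
  obtain ⟨K, D, hD⟩ := hg.norm_iteratedFDeriv_cexp_comp_le m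
  refine ⟨|D| * Real.exp C * Real.exp ((k + K : ℕ) ^ 2 / (4 * c)), fun x ↦ ?_⟩
  calc ‖x‖ ^ k * ‖iteratedFDeriv ℝ m (fun x ↦ cexp (g x)) x‖
      ≤ (1 + ‖x‖) ^ k * (|D| * (1 + ‖x‖) ^ K * Real.exp (C - c * ‖x‖ ^ 2)) := by
        gcongr
        · simp
        · exact (hD x).trans (by gcongr; exacts [le_abs_self D, hre x])
    _ = |D| * Real.exp C * ((1 + ‖x‖) ^ (k + K) * Real.exp (-(c * ‖x‖ ^ 2))) := by
        rw [sub_eq_add_neg, Real.exp_add, pow_add]; ring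
    _ ≤ |D| * Real.exp C * Real.exp ((k + K : ℕ) ^ 2 / (4 * c)) := by
        gcongr
        exact one_add_pow_mul_exp_neg_mul_sq_le _ hc (norm_nonneg x)

end SchwartzExp

section Coercive

variable {E : Type*} [NormedAddCommGroup E] [InnerProductSpace ℝ E] [FiniteDimensional ℝ E]

theorem exists_pos_mul_norm_sq_le_inner_self (T : E →ₗ[ℝ] E) (hT : ∀ x, x ≠ 0 → 0 < ⟪T x, x⟫) :
    ∃ c, 0 < c ∧ ∀ x, c * ‖x‖ ^ 2 ≤ ⟪T x, x⟫ := by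
  cases subsingleton_or_nontrivial E with
  | inl _ => exact ⟨1, one_pos, fun x ↦ by simp [Subsingleton.elim x 0]⟩
  | inr _ =>
    have hcont : Continuous fun x ↦ ⟪T x, x⟫ :=
      (LinearMap.continuous_of_finiteDimensional T).inner continuous_id
    obtain ⟨u₀, hu₀, hmin⟩ := (isCompact_sphere (0 : E) 1).exists_isMinOn
      (NormedSpace.sphere_nonempty.2 zero_le_one) hcont.continuousOn
    refine ⟨⟪T u₀, u₀⟫, hT u₀ (ne_zero_of_mem_unit_sphere ⟨u₀, hu₀⟩), fun x ↦ ?_⟩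
    rcases eq_or_ne x 0 with rfl | hx
    · simp
    have hx' : ‖x‖ ≠ 0 := norm_ne_zero_iff.2 hx
    have hu : ‖x‖⁻¹ • x ∈ Metric.sphere (0 : E) 1 := by simp [norm_smul, hx']
    calc ⟪T u₀, u₀⟫ * ‖x‖ ^ 2 ≤ ⟪T (‖x‖⁻¹ • x), ‖x‖⁻¹ • x⟫ * ‖x‖ ^ 2 := by
          gcongr; exact hmin hu
      _ = ⟪T x, x⟫ := by
        rw [map_smul, real_inner_smul_left, real_inner_smul_right]; field_simp

end Coercive

section Nice

variable {n : ℕ}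

theorem exists_schwartzMap_eq_cexp_quadratic
    {A : EuclideanSpace ℝ (Fin n) →ₗ[ℝ] EuclideanSpace ℝ (Fin n)} (hA : IsPosDefSymm A)
    (b : Fin n → ℂ) : ∃ f : 𝓢(EuclideanSpace ℝ (Fin n), ℂ),
      ⇑f = fun x ↦ cexp (-((⟪A x, x⟫ : ℝ) : ℂ) + ∑ j, b j * (x j : ℂ)) := by
  obtain ⟨c, hc, hcA⟩ := exists_pos_mul_norm_sq_le_inner_self A hA.2
  set B := ∑ j, ‖b j‖
  refine exists_schwartzMap_eq_cexp_comp ?_ (half_pos hc) (C := B ^ 2 / (2 * c)) fun x ↦ ?_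
  · have hq : Function.HasTemperateGrowth fun x : EuclideanSpace ℝ (Fin n) ↦ ⟪A x, x⟫ :=
      (innerSL ℝ).bilinear_hasTemperateGrowth A.toContinuousLinearMap.hasTemperateGrowth
        Function.HasTemperateGrowth.id'
    have hcoord (j : Fin n) : Function.HasTemperateGrowth fun x : EuclideanSpace ℝ (Fin n) ↦
        (x j : ℂ) :=
      (ofRealCLM.comp (EuclideanSpace.proj j)).hasTemperateGrowth
    fun_prop
  · have hlin : ‖∑ j, b j * (x j : ℂ)‖ ≤ B * ‖x‖ := by
      rw [Finset.sum_mul]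
      refine (norm_sum_le _ _).trans (Finset.sum_le_sum fun j _ ↦ ?_)
      rw [norm_mul, Complex.norm_real]
      gcongr
      exact PiLp.norm_apply_le x j
    have hre : (-((⟪A x, x⟫ : ℝ) : ℂ) + ∑ j, b j * (x j : ℂ)).re ≤
        -(c * ‖x‖ ^ 2) + B * ‖x‖ := by
      rw [add_re, neg_re, ofReal_re]
      linarith [hcA x, (re_le_norm _).trans hlin]
    refine hre.trans ?_
    have hsq : B ^ 2 / (2 * c) - c / 2 * ‖x‖ ^ 2 - (-(c * ‖x‖ ^ 2) + B * ‖x‖) =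
        (c * ‖x‖ - B) ^ 2 / (2 * c) := by
      field_simp; ring
    linarith [div_nonneg (sq_nonneg (c * ‖x‖ - B)) (by positivity : (0 : ℝ) ≤ 2 * c)]

theorem exists_schwartzMap_eq_buildingBlock (α : Fin n → ℕ)
    {A : EuclideanSpace ℝ (Fin n) →ₗ[ℝ] EuclideanSpace ℝ (Fin n)} (hA : IsPosDefSymm A)
    (b : Fin n → ℂ) : ∃ f : 𝓢(EuclideanSpace ℝ (Fin n), ℂ), ⇑f = buildingBlock α A b := by
  obtain ⟨g, hg⟩ := exists_schwartzMap_eq_cexp_quadratic hA b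
  have hmono : Function.HasTemperateGrowth fun x : EuclideanSpace ℝ (Fin n) ↦
      ∏ j, (x j : ℂ) ^ α j := by
    rw [← Finset.prod_fn]
    refine Finset.prod_induction _ _ (fun _ _ ↦ .mul) (.const 1) fun j _ ↦ ?_
    exact (ofRealCLM.comp (EuclideanSpace.proj j)).hasTemperateGrowth.pow (α j)
  refine ⟨SchwartzMap.smulLeftCLM ℂ (fun x : EuclideanSpace ℝ (Fin n) ↦ ∏ j, (x j : ℂ) ^ α j) g,
    funext fun x ↦ ?_⟩
  rw [SchwartzMap.smulLeftCLM_apply_apply hmono, hg, smul_eq_mul, buildingBlock]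

theorem IsNice.exists_schwartzMap {f : EuclideanSpace ℝ (Fin n) → ℂ} (hf : IsNice f) :
    ∃ g : 𝓢(EuclideanSpace ℝ (Fin n), ℂ), ⇑g = f := by
  induction hf using Submodule.span_induction with
  | mem g hg =>
    obtain ⟨α, A, b, hA, rfl⟩ := hg
    exact exists_schwartzMap_eq_buildingBlock α hA b
  | zero => exact ⟨0, rfl⟩
  | add f₁ f₂ _ _ ih₁ ih₂ =>
    obtain ⟨g₁, rfl⟩ := ih₁
    obtain ⟨g₂, rfl⟩ := ih₂
    exact ⟨g₁ + g₂, rfl⟩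
  | smul c f _ ih =>
    obtain ⟨g, rfl⟩ := ih
    exact ⟨c • g, rfl⟩

theorem FT_eq_fourier (f : EuclideanSpace ℝ (Fin n) → ℂ) : FT f = 𝓕 f := by
  ext ξ
  rw [FT, Real.fourier_eq']
  congr 1 with x
  rw [smul_eq_mul, mul_comm]
  push_cast
  ring_nf

theorem invFT_eq_fourierInv (φ : EuclideanSpace ℝ (Fin n) → ℂ) : invFT φ = 𝓕⁻ φ := by
  ext x
  rw [invFT, Real.fourierInv_eq']
  congr 1 with ξ
  rw [smul_eq_mul, mul_comm]
  push_cast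
  ring_nf

end Nice

/-- Fourier inversion for nice functions. -/
theorem fourier_inversion_nice (n : ℕ)
    (f : EuclideanSpace ℝ (Fin n) → ℂ) (hf : IsNice f)
    (x : EuclideanSpace ℝ (Fin n)) :
    f x = ∫ ξ : EuclideanSpace ℝ (Fin n),
      FT f ξ * Complex.exp (2 * (Real.pi : ℂ) * Complex.I * (⟪ξ, x⟫ : ℂ)) := by
  obtain ⟨g, rfl⟩ := hf.exists_schwartzMap
  change g x = invFT (FT g) x
  rw [invFT_eq_fourierInv, FT_eq_fourier, ← SchwartzMap.fourier_coe,
    ← SchwartzMap.fourierInv_coe, FourierTransform.fourierInv_fourier_eq]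
end

section
/- If f₁ and f₂ are nice functions on ℝⁿ, then their convolution (f₁ * f₂)(x) = ∫_{ℝⁿ} f₁(y) f₂(x − y) dy is again a nice function on ℝⁿ. -/
open MeasureTheory Real
open scoped RealInnerProductSpace

/-!
Nice functions span a space on which convolution is bilinear, so it suffices to convolve two
building blocks; every building block is dominated by a Gaussian, which makes all the integrals
involved converge. Substituting `y = z + C x` in `∫ y, f₁ y * f₂ (x - y)`, where
`C = (A₁ + A₂)⁻¹ A₂`, completes the square:
`⟪A₁ y, y⟫ + ⟪A₂ (x - y), x - y⟫ = ⟪(A₁ + A₂) z, z⟫ + ⟪(A₂ - A₂ C) x, x⟫`,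
and `A₂ - A₂ C` is again positive definite. The linear part of the exponent splits as a linear form
in `z` plus one in `x`, and `y ^ α * (x - y) ^ β` is a polynomial in `(x, z)`, i.e. a combination
of `x ^ κ * z ^ γ`. Integrating out `z` turns each term into a constant multiple of the building
block `x ^ κ * exp (-⟪(A₂ - A₂ C) x, x⟫ + d · x)`.
-/

section PositiveDefinite

variable {E : Type*} [NormedAddCommGroup E] [InnerProductSpace ℝ E] {A A₁ A₂ C : E →ₗ[ℝ] E}

theorem LinearMap.inner_self_nonneg_of_pos (hA : ∀ x, x ≠ 0 → 0 < ⟪A x, x⟫) (x : E) :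
    0 ≤ ⟪A x, x⟫ := by
  rcases eq_or_ne x 0 with rfl | hx
  · simp
  · exact (hA x hx).le

theorem LinearMap.exists_pos_mul_sq_norm_le_inner [FiniteDimensional ℝ E]
    (hA : ∀ x, x ≠ 0 → 0 < ⟪A x, x⟫) : ∃ ε > 0, ∀ x, ε * ‖x‖ ^ 2 ≤ ⟪A x, x⟫ := by
  rcases subsingleton_or_nontrivial E with hE | hE
  · exact ⟨1, one_pos, fun x => by simp [Subsingleton.elim x 0]⟩
  obtain ⟨u, hu, hmin⟩ := (isCompact_sphere (0 : E) 1).exists_isMinOn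
    (NormedSpace.sphere_nonempty.2 zero_le_one)
    ((A.continuous_of_finiteDimensional).inner (𝕜 := ℝ) continuous_id').continuousOn
  have hu₁ : ‖u‖ = 1 := by simpa using hu
  refine ⟨⟪A u, u⟫, hA u (ne_zero_of_norm_ne_zero (by simp [hu₁])), fun x => ?_⟩
  rcases eq_or_ne x 0 with rfl | hx
  · simp
  have hx' : ‖x‖ ≠ 0 := norm_ne_zero_iff.2 hx
  have hle := hmin (a := ‖x‖⁻¹ • x) (by simp [norm_smul, hx'])
  simp only [Set.mem_ofPred_eq, map_smul, real_inner_smul_left, real_inner_smul_right] at hle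
  calc ⟪A u, u⟫ * ‖x‖ ^ 2 ≤ ‖x‖⁻¹ * (‖x‖⁻¹ * ⟪A x, x⟫) * ‖x‖ ^ 2 := by gcongr
    _ = ⟪A x, x⟫ := by field_simp

theorem LinearMap.exists_comp_eq_of_pos [FiniteDimensional ℝ E]
    (hA : ∀ x, x ≠ 0 → 0 < ⟪A x, x⟫) (T : E →ₗ[ℝ] E) : ∃ C : E →ₗ[ℝ] E, ∀ x, A (C x) = T x := by
  have hinj : Function.Injective A := by
    refine (injective_iff_map_eq_zero A).2 fun x hx => ?_
    by_contra hx0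
    simpa [hx] using hA x hx0
  let e := LinearEquiv.ofInjectiveEndo A hinj
  exact ⟨e.symm.toLinearMap ∘ₗ T, fun x => e.apply_symm_apply (T x)⟩

theorem LinearMap.inner_add_inner_eq_complete_square (h₁ : A₁.IsSymmetric) (h₂ : A₂.IsSymmetric)
    (hC : ∀ x, (A₁ + A₂) (C x) = A₂ x) (x z : E) :
    ⟪A₁ (z + C x), z + C x⟫ + ⟪A₂ (x - (z + C x)), x - (z + C x)⟫
      = ⟪(A₁ + A₂) z, z⟫ + ⟪(A₂ - A₂ ∘ₗ C) x, x⟫ := by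
  have hCw : ∀ w, ⟪A₁ (C x), w⟫ + ⟪A₂ (C x), w⟫ = ⟪A₂ x, w⟫ := fun w => by
    rw [← inner_add_left, ← LinearMap.add_apply, hC]
  simp only [map_add, map_sub, LinearMap.add_apply, LinearMap.sub_apply, LinearMap.comp_apply,
    inner_add_left, inner_add_right, inner_sub_left, inner_sub_right]
  have s₁ : ⟪A₁ z, C x⟫ = ⟪A₁ (C x), z⟫ := by rw [h₁, real_inner_comm]
  have s₂ : ⟪A₂ z, x⟫ = ⟪A₂ x, z⟫ := by rw [h₂, real_inner_comm]
  have s₃ : ⟪A₂ z, C x⟫ = ⟪A₂ (C x), z⟫ := by rw [h₂, real_inner_comm]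
  linear_combination 2 * hCw z + hCw (C x) + s₁ - s₂ + s₃

theorem LinearMap.isSymmetric_sub_comp (h₁ : A₁.IsSymmetric) (h₂ : A₂.IsSymmetric)
    (hC : ∀ x, (A₁ + A₂) (C x) = A₂ x) : (A₂ - A₂ ∘ₗ C).IsSymmetric := by
  intro u v
  have hcomp : ⟪A₂ (C u), v⟫ = ⟪u, A₂ (C v)⟫ := calc
    ⟪A₂ (C u), v⟫ = ⟪C u, (A₁ + A₂) (C v)⟫ := by rw [h₂, hC]
    _ = ⟪u, A₂ (C v)⟫ := by rw [← h₁.add h₂, hC, h₂]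
  simp only [LinearMap.sub_apply, LinearMap.comp_apply, inner_sub_left, inner_sub_right, h₂ u v,
    hcomp]

theorem LinearMap.inner_sub_comp_pos (h₁ : A₁.IsSymmetric) (h₂ : A₂.IsSymmetric)
    (hC : ∀ x, (A₁ + A₂) (C x) = A₂ x) (hA₁ : ∀ x, x ≠ 0 → 0 < ⟪A₁ x, x⟫)
    (hA₂ : ∀ x, x ≠ 0 → 0 < ⟪A₂ x, x⟫) (x : E) (hx : x ≠ 0) : 0 < ⟪(A₂ - A₂ ∘ₗ C) x, x⟫ := by
  have h := inner_add_inner_eq_complete_square h₁ h₂ hC x 0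
  simp only [zero_add, map_zero, inner_zero_left] at h
  rw [← h]
  rcases eq_or_ne (C x) 0 with hCx | hCx
  · simpa [hCx] using hA₂ x hx
  · exact add_pos_of_pos_of_nonneg (hA₁ _ hCx) (inner_self_nonneg_of_pos hA₂ _)

end PositiveDefinite

theorem integrable_of_norm_le_exp_sub_sq {V F : Type*} [NormedAddCommGroup V]
    [InnerProductSpace ℝ V] [FiniteDimensional ℝ V] [MeasurableSpace V] [BorelSpace V]
    [NormedAddCommGroup F] {f : V → F} {M ε : ℝ} (hε : 0 < ε) (hf : AEStronglyMeasurable f)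
    (hle : ∀ x, ‖f x‖ ≤ exp (M * ‖x‖ - ε * ‖x‖ ^ 2)) : Integrable f := by
  have hgauss := (GaussianFourier.integrable_cexp_neg_mul_sq_norm_add (V := V)
    (b := ((ε / 2 : ℝ) : ℂ)) (by simpa using half_pos hε) 0 0).norm.const_mul (exp (M ^ 2 / ε))
  refine hgauss.mono' hf (ae_of_all _ fun x => (hle x).trans ?_)
  rw [Complex.norm_exp, ← Real.exp_add]
  refine exp_le_exp.2 ?_
  have hsq : M * ‖x‖ - ε * ‖x‖ ^ 2 + ε / 2 * ‖x‖ ^ 2 ≤ M ^ 2 / ε := by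
    rw [le_div_iff₀ hε]
    nlinarith [sq_nonneg (ε * ‖x‖ - M)]
  simp only [inner_zero_left, Complex.ofReal_zero, mul_zero, add_zero, Complex.neg_re,
    Complex.mul_re, Complex.ofReal_re]
  norm_cast
  linarith

open scoped Convolution

namespace MeasureTheory

section

variable {𝕜 G E E' F : Type*} [NontriviallyNormedField 𝕜] [NormedAddCommGroup E]
  [NormedAddCommGroup E'] [NormedAddCommGroup F] [NormedSpace 𝕜 E] [NormedSpace 𝕜 E']
  [NormedSpace 𝕜 F] [MeasurableSpace G] [Sub G] {μ : Measure G} {L : E →L[𝕜] E' →L[𝕜] F}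
  {f : G → E} {g g' : G → E'}

theorem convolutionExists_zero_right : ConvolutionExists f (0 : G → E') L μ := fun x => by
  simp [ConvolutionExistsAt]

theorem ConvolutionExists.add_right (hg : ConvolutionExists f g L μ)
    (hg' : ConvolutionExists f g' L μ) : ConvolutionExists f (g + g') L μ := fun x => by
  simp only [ConvolutionExistsAt, Pi.add_apply, map_add]
  exact (hg x).add (hg' x)

theorem ConvolutionExists.smul_right (hg : ConvolutionExists f g L μ) (c : 𝕜) :
    ConvolutionExists f (c • g) L μ := fun x => by
  simp only [ConvolutionExistsAt, Pi.smul_apply, map_smul]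
  exact (hg x).smul c

end

variable {𝕜 G : Type*} [NontriviallyNormedField 𝕜] [MeasurableSpace G] [AddCommGroup G]
  [MeasurableAdd G] [MeasurableNeg G] {μ : Measure G} [μ.IsAddLeftInvariant] [μ.IsNegInvariant]
  {f g : G → 𝕜}

theorem ConvolutionExists.swap_mul (h : ConvolutionExists f g (ContinuousLinearMap.mul 𝕜 𝕜) μ) :
    ConvolutionExists g f (ContinuousLinearMap.mul 𝕜 𝕜) μ := fun x => by
  rw [← convolutionExistsAt_flip, ContinuousLinearMap.flip_mul]
  exact h x

theorem convolution_mul_comm [NormedSpace ℝ 𝕜] :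
    f ⋆[ContinuousLinearMap.mul 𝕜 𝕜, μ] g = g ⋆[ContinuousLinearMap.mul 𝕜 𝕜, μ] f := by
  rw [← convolution_flip, ContinuousLinearMap.flip_mul]

end MeasureTheory

section Euclidean

variable {n : ℕ}

local notation "ℝⁿ" => EuclideanSpace ℝ (Fin n)

theorem LinearMap.apply_eq_sum_smul_single {M : Type*} [AddCommGroup M] [Module ℝ M]
    (ℓ : ℝⁿ →ₗ[ℝ] M) (x : ℝⁿ) : ℓ x = ∑ i, x i • ℓ (EuclideanSpace.single i 1) := by
  conv_lhs => rw [← (EuclideanSpace.basisFun (Fin n) ℝ).sum_repr x]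
  simp

namespace EuclideanSpace

def dotₗ (b : Fin n → ℂ) : ℝⁿ →ₗ[ℝ] ℂ where
  toFun x := ∑ j, b j * (x j : ℂ)
  map_add' x y := by simp [mul_add, Finset.sum_add_distrib]
  map_smul' r x := by simp [Finset.mul_sum, mul_left_comm]

@[simp]
theorem dotₗ_apply (b : Fin n → ℂ) (x : ℝⁿ) : dotₗ b x = ∑ j, b j * (x j : ℂ) := rfl

theorem dotₗ_sub (b c : Fin n → ℂ) : dotₗ (b - c) = dotₗ b - dotₗ c := by
  ext x
  simp [sub_mul, Finset.sum_sub_distrib]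

theorem eq_dotₗ (ℓ : ℝⁿ →ₗ[ℝ] ℂ) : ℓ = dotₗ fun j => ℓ (single j 1) := by
  ext x
  simp [ℓ.apply_eq_sum_smul_single x, mul_comm]

theorem norm_dotₗ_le (b : Fin n → ℂ) (x : ℝⁿ) : ‖dotₗ b x‖ ≤ (∑ j, ‖b j‖) * ‖x‖ := by
  rw [dotₗ_apply, Finset.sum_mul]
  refine (norm_sum_le _ _).trans (Finset.sum_le_sum fun j _ => ?_)
  rw [norm_mul, Complex.norm_real]
  gcongr
  exact PiLp.norm_apply_le x j

end EuclideanSpace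

open EuclideanSpace

theorem buildingBlock_apply (α : Fin n → ℕ) (A : ℝⁿ →ₗ[ℝ] ℝⁿ) (b : Fin n → ℂ) (x : ℝⁿ) :
    buildingBlock α A b x = (∏ j, (x j : ℂ) ^ α j) * Complex.exp (-(⟪A x, x⟫ : ℂ) + dotₗ b x) :=
  rfl

theorem prod_pow_mul_buildingBlock (κ α : Fin n → ℕ) (A : ℝⁿ →ₗ[ℝ] ℝⁿ) (b : Fin n → ℂ)
    (x : ℝⁿ) : (∏ j, (x j : ℂ) ^ κ j) * buildingBlock α A b x = buildingBlock (κ + α) A b x := by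
  simp only [buildingBlock_apply, Pi.add_apply, pow_add, Finset.prod_mul_distrib, mul_assoc]

theorem continuous_buildingBlock (α : Fin n → ℕ) (A : ℝⁿ →ₗ[ℝ] ℝⁿ) (b : Fin n → ℂ) :
    Continuous (buildingBlock α A b) := by
  have hA : Continuous fun x : ℝⁿ => ⟪A x, x⟫ :=
    A.continuous_of_finiteDimensional.inner (𝕜 := ℝ) continuous_id'
  have hcoord (j : Fin n) : Continuous fun x : ℝⁿ => x j := (proj (𝕜 := ℝ) j).continuous
  unfold buildingBlock
  fun_prop

theorem norm_buildingBlock_le (α : Fin n → ℕ) {A : ℝⁿ →ₗ[ℝ] ℝⁿ} (b : Fin n → ℂ) {ε : ℝ}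
    (hε : ∀ x, ε * ‖x‖ ^ 2 ≤ ⟪A x, x⟫) (x : ℝⁿ) :
    ‖buildingBlock α A b x‖ ≤ exp ((∑ j, α j + ∑ j, ‖b j‖) * ‖x‖ - ε * ‖x‖ ^ 2) := by
  have hmono : ‖∏ j, (x j : ℂ) ^ α j‖ ≤ exp ((∑ j, α j : ℕ) * ‖x‖) := calc
    ‖∏ j, (x j : ℂ) ^ α j‖ ≤ ∏ j, ‖x‖ ^ α j := by
      simp only [norm_prod, norm_pow, Complex.norm_real]
      gcongr with j
      exact PiLp.norm_apply_le x j
    _ = ‖x‖ ^ ∑ j, α j := Finset.prod_pow_eq_pow_sum _ _ _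
    _ ≤ exp ‖x‖ ^ ∑ j, α j := by gcongr; linarith [add_one_le_exp ‖x‖]
    _ = exp ((∑ j, α j : ℕ) * ‖x‖) := (exp_nat_mul _ _).symm
  have hexp : ‖Complex.exp (-(⟪A x, x⟫ : ℂ) + dotₗ b x)‖
      ≤ exp ((∑ j, ‖b j‖) * ‖x‖ - ε * ‖x‖ ^ 2) := by
    rw [Complex.norm_exp, Complex.add_re, Complex.neg_re, Complex.ofReal_re]
    refine exp_le_exp.2 ?_
    linarith [hε x, (Complex.re_le_norm (dotₗ b x)).trans (norm_dotₗ_le b x)]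
  rw [buildingBlock_apply, norm_mul]
  calc _ ≤ exp ((∑ j, α j : ℕ) * ‖x‖) * exp ((∑ j, ‖b j‖) * ‖x‖ - ε * ‖x‖ ^ 2) := by
        gcongr
    _ = _ := by rw [← exp_add]; push_cast; ring_nf

theorem integrable_buildingBlock (α : Fin n → ℕ) {A : ℝⁿ →ₗ[ℝ] ℝⁿ} (b : Fin n → ℂ)
    (hA : ∀ x, x ≠ 0 → 0 < ⟪A x, x⟫) : Integrable (buildingBlock α A b) := by
  obtain ⟨ε, hε, hεA⟩ := A.exists_pos_mul_sq_norm_le_inner hA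
  exact integrable_of_norm_le_exp_sub_sq hε
    (continuous_buildingBlock α A b).aestronglyMeasurable (norm_buildingBlock_le α b hεA)

theorem isNice_zero : IsNice (0 : ℝⁿ → ℂ) :=
  Submodule.zero_mem _

theorem IsNice.add {f g : ℝⁿ → ℂ} (hf : IsNice f) (hg : IsNice g) : IsNice (f + g) :=
  Submodule.add_mem _ hf hg

theorem IsNice.smul {f : ℝⁿ → ℂ} (hf : IsNice f) (a : ℂ) : IsNice (a • f) :=
  Submodule.smul_mem _ a hf

theorem isNice_buildingBlock (α : Fin n → ℕ) {A : ℝⁿ →ₗ[ℝ] ℝⁿ} (b : Fin n → ℂ)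
    (hA : IsPosDefSymm A) : IsNice (buildingBlock α A b) :=
  Submodule.subset_span ⟨α, A, b, hA, rfl⟩

def biMonomial (κ γ : Fin n → ℕ) : ℝⁿ → ℝⁿ → ℂ :=
  fun x z => (∏ j, (x j : ℂ) ^ κ j) * ∏ j, (z j : ℂ) ^ γ j

def biCoordFns : Set (ℝⁿ → ℝⁿ → ℂ) :=
  Set.range (fun i (x _ : ℝⁿ) => (x i : ℂ)) ∪ Set.range (fun i (_ z : ℝⁿ) => (z i : ℂ))

theorem adjoin_biCoordFns_le_span_biMonomial :
    Subalgebra.toSubmodule (Algebra.adjoin ℂ (biCoordFns (n := n)))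
      ≤ Submodule.span ℂ (Set.range fun p : (Fin n → ℕ) × (Fin n → ℕ) => biMonomial p.1 p.2) := by
  rw [Algebra.adjoin_eq_span]
  refine Submodule.span_mono fun F hF => ?_
  induction hF using Submonoid.closure_induction with
  | mem F hF =>
    rcases hF with ⟨i, rfl⟩ | ⟨i, rfl⟩
    · exact ⟨(Pi.single i 1, 0), by ext x z; simp [biMonomial, Pi.single_apply]⟩
    · exact ⟨(0, Pi.single i 1), by ext x z; simp [biMonomial, Pi.single_apply]⟩
  | one => exact ⟨(0, 0), by ext x z; simp [biMonomial]⟩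
  | mul F G _ _ hF hG =>
    obtain ⟨⟨κ, γ⟩, rfl⟩ := hF
    obtain ⟨⟨κ', γ'⟩, rfl⟩ := hG
    refine ⟨(κ + κ', γ + γ'), ?_⟩
    ext x z
    simp only [biMonomial, Pi.add_apply, pow_add, Finset.prod_mul_distrib, Pi.mul_apply]
    ring

theorem coord_apply_mem_adjoin_biCoordFns (T : ℝⁿ →ₗ[ℝ] ℝⁿ) (j : Fin n) :
    (fun x (_ : ℝⁿ) => (T x j : ℂ)) ∈ Algebra.adjoin ℂ biCoordFns := by
  have hT : (fun x (_ : ℝⁿ) => (T x j : ℂ))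
      = ∑ i, (T (single i 1) j : ℂ) • fun x (_ : ℝⁿ) => (x i : ℂ) := by
    ext x z
    simp [T.apply_eq_sum_smul_single x, Finset.sum_apply, mul_comm]
  rw [hT]
  exact Subalgebra.sum_mem _ fun i _ =>
    Subalgebra.smul_mem _ (Algebra.subset_adjoin (Set.mem_union_left _ (Set.mem_range_self i))) _

theorem prod_pow_mem_adjoin_biCoordFns (C : ℝⁿ →ₗ[ℝ] ℝⁿ) (α β : Fin n → ℕ) :
    (fun x z : ℝⁿ => ∏ j, ((z + C x) j : ℂ) ^ α j * ((x - (z + C x)) j : ℂ) ^ β j)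
      ∈ Algebra.adjoin ℂ biCoordFns := by
  have hprod : (fun x z : ℝⁿ => ∏ j, ((z + C x) j : ℂ) ^ α j * ((x - (z + C x)) j : ℂ) ^ β j)
      = ∏ j, (fun x z : ℝⁿ => ((z + C x) j : ℂ)) ^ α j
        * (fun x z : ℝⁿ => ((x - (z + C x)) j : ℂ)) ^ β j := by
    ext x z
    simp [Finset.prod_apply]
  have hz (j : Fin n) : (fun (_ z : ℝⁿ) => (z j : ℂ)) ∈ Algebra.adjoin ℂ biCoordFns :=
    Algebra.subset_adjoin (Set.mem_union_right _ (Set.mem_range_self j))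
  rw [hprod]
  refine Subalgebra.prod_mem _ fun j _ => Subalgebra.mul_mem _ (Subalgebra.pow_mem _ ?_ _)
    (Subalgebra.pow_mem _ ?_ _)
  · convert Subalgebra.add_mem _ (coord_apply_mem_adjoin_biCoordFns C j) (hz j) using 1
    ext x z
    simp [add_comm]
  · convert Subalgebra.sub_mem _ (coord_apply_mem_adjoin_biCoordFns (LinearMap.id - C) j) (hz j)
      using 1
    ext x z
    simp [sub_add_eq_sub_sub_swap]

theorem integral_mul_buildingBlock_isNice {F : ℝⁿ → ℝⁿ → ℂ}
    (hF : F ∈ Submodule.span ℂ (Set.range fun p : (Fin n → ℕ) × (Fin n → ℕ) => biMonomial p.1 p.2))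
    {B S : ℝⁿ →ₗ[ℝ] ℝⁿ} (c d : Fin n → ℂ) (hB : ∀ x, x ≠ 0 → 0 < ⟪B x, x⟫)
    (hS : IsPosDefSymm S) :
    (∀ x, Integrable fun z => F x z * buildingBlock 0 B c z) ∧
      IsNice fun x => (∫ z, F x z * buildingBlock 0 B c z) * buildingBlock 0 S d x := by
  induction hF using Submodule.span_induction with
  | mem F hF =>
    obtain ⟨⟨κ, γ⟩, rfl⟩ := hF
    have hmono (x z : ℝⁿ) : biMonomial κ γ x z * buildingBlock 0 B c z
        = (∏ j, (x j : ℂ) ^ κ j) * buildingBlock γ B c z := by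
      rw [biMonomial, mul_assoc, prod_pow_mul_buildingBlock, add_zero]
    simp_rw [hmono, integral_const_mul]
    refine ⟨fun x => (integrable_buildingBlock γ c hB).const_mul _, ?_⟩
    have hconv : (fun x => (∏ j, (x j : ℂ) ^ κ j) * (∫ z, buildingBlock γ B c z)
        * buildingBlock 0 S d x) = (∫ z, buildingBlock γ B c z) • buildingBlock κ S d := by
      ext x
      rw [Pi.smul_apply, smul_eq_mul, mul_right_comm, prod_pow_mul_buildingBlock, add_zero,
        mul_comm]
    rw [hconv]
    exact (isNice_buildingBlock κ d hS).smul _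
  | zero => exact ⟨fun x => by simp, by simpa [← Pi.zero_def] using isNice_zero (n := n)⟩
  | add F G _ _ hF hG =>
    refine ⟨fun x => by simp only [Pi.add_apply, add_mul]; exact (hF.1 x).add (hG.1 x), ?_⟩
    convert hF.2.add hG.2 using 1
    ext x
    simp [add_mul, integral_add (hF.1 x) (hG.1 x)]
  | smul a F _ hF =>
    refine ⟨fun x => by simpa [mul_assoc] using (hF.1 x).const_mul a, ?_⟩
    convert hF.2.smul a using 1
    ext x
    simp [mul_assoc, integral_const_mul]

theorem buildingBlock_mul_buildingBlock_eq {A₁ A₂ C : ℝⁿ →ₗ[ℝ] ℝⁿ} (h₁ : A₁.IsSymmetric)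
    (h₂ : A₂.IsSymmetric) (hC : ∀ x, (A₁ + A₂) (C x) = A₂ x) (α β : Fin n → ℕ)
    (b₁ b₂ : Fin n → ℂ) (x z : ℝⁿ) :
    buildingBlock α A₁ b₁ (z + C x) * buildingBlock β A₂ b₂ (x - (z + C x))
      = (∏ j, ((z + C x) j : ℂ) ^ α j * ((x - (z + C x)) j : ℂ) ^ β j)
        * buildingBlock 0 (A₁ + A₂) (b₁ - b₂) z
        * buildingBlock 0 (A₂ - A₂ ∘ₗ C)
            (fun j => (dotₗ b₂ + dotₗ (b₁ - b₂) ∘ₗ C) (single j 1)) x := by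
  have hquad := congrArg Complex.ofReal
    (LinearMap.inner_add_inner_eq_complete_square h₁ h₂ hC x z)
  have hlin : dotₗ b₁ (z + C x) + dotₗ b₂ (x - (z + C x))
      = dotₗ (b₁ - b₂) z + dotₗ (fun j => (dotₗ b₂ + dotₗ (b₁ - b₂) ∘ₗ C) (single j 1)) x := by
    rw [← eq_dotₗ]
    simp only [map_add, map_sub, dotₗ_sub, LinearMap.add_apply, LinearMap.sub_apply,
      LinearMap.comp_apply]
    ring
  simp only [buildingBlock_apply, Pi.zero_apply, pow_zero, Finset.prod_const_one, one_mul]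
  rw [mul_mul_mul_comm, ← Complex.exp_add, mul_assoc _ (Complex.exp _), ← Complex.exp_add,
    ← Finset.prod_mul_distrib]
  push_cast at hquad
  congr 2
  linear_combination hlin - hquad

theorem buildingBlock_convolution {α β : Fin n → ℕ} {A₁ A₂ : ℝⁿ →ₗ[ℝ] ℝⁿ} {b₁ b₂ : Fin n → ℂ}
    (h₁ : IsPosDefSymm A₁) (h₂ : IsPosDefSymm A₂) :
    ConvolutionExists (buildingBlock α A₁ b₁) (buildingBlock β A₂ b₂)
        (ContinuousLinearMap.mul ℂ ℂ) ∧
      IsNice (buildingBlock α A₁ b₁ ⋆[ContinuousLinearMap.mul ℂ ℂ] buildingBlock β A₂ b₂) := by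
  have hB : ∀ x, x ≠ 0 → 0 < ⟪(A₁ + A₂) x, x⟫ := fun x hx => by
    rw [LinearMap.add_apply, inner_add_left]
    exact add_pos_of_pos_of_nonneg (h₁.2 x hx) (A₂.inner_self_nonneg_of_pos h₂.2 x)
  obtain ⟨C, hC⟩ := LinearMap.exists_comp_eq_of_pos hB A₂
  have hS : IsPosDefSymm (A₂ - A₂ ∘ₗ C) :=
    ⟨LinearMap.isSymmetric_sub_comp h₁.1 h₂.1 hC, LinearMap.inner_sub_comp_pos h₁.1 h₂.1 hC h₁.2 h₂.2⟩
  have hsplit := buildingBlock_mul_buildingBlock_eq h₁.1 h₂.1 hC α β b₁ b₂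
  set d : Fin n → ℂ := fun j => (dotₗ b₂ + dotₗ (b₁ - b₂) ∘ₗ C) (single j 1)
  obtain ⟨hint, hnice⟩ := integral_mul_buildingBlock_isNice
    (adjoin_biCoordFns_le_span_biMonomial (prod_pow_mem_adjoin_biCoordFns C α β)) (b₁ - b₂) d hB hS
  refine ⟨fun x => ?_, ?_⟩
  · have h := ((hint x).mul_const (buildingBlock 0 (A₂ - A₂ ∘ₗ C) d x)).comp_sub_right (C x)
    simp_rw [← hsplit, sub_add_cancel] at h
    exact h
  · convert hnice using 1
    ext x
    rw [convolution_mul, ← integral_add_right_eq_self _ (C x)]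
    simp_rw [hsplit, integral_mul_const]

theorem IsNice.convolution_of_forall_buildingBlock {f g : ℝⁿ → ℂ}
    (h : ∀ α A b, IsPosDefSymm A →
      ConvolutionExists f (buildingBlock α A b) (ContinuousLinearMap.mul ℂ ℂ) ∧
        IsNice (f ⋆[ContinuousLinearMap.mul ℂ ℂ] buildingBlock α A b))
    (hg : IsNice g) :
    ConvolutionExists f g (ContinuousLinearMap.mul ℂ ℂ) ∧
      IsNice (f ⋆[ContinuousLinearMap.mul ℂ ℂ] g) := by
  induction hg using Submodule.span_induction with
  | mem g hg =>
    obtain ⟨α, A, b, hA, rfl⟩ := hg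
    exact h α A b hA
  | zero => exact ⟨convolutionExists_zero_right, by simpa using isNice_zero⟩
  | add g g' _ _ hg hg' =>
    refine ⟨hg.1.add_right hg'.1, ?_⟩
    rw [hg.1.distrib_add hg'.1]
    exact hg.2.add hg'.2
  | smul c g _ hg =>
    refine ⟨hg.1.smul_right c, ?_⟩
    rw [convolution_smul]
    exact hg.2.smul c

theorem IsNice.convolution {f g : ℝⁿ → ℂ} (hf : IsNice f) (hg : IsNice g) :
    ConvolutionExists f g (ContinuousLinearMap.mul ℂ ℂ) ∧
      IsNice (f ⋆[ContinuousLinearMap.mul ℂ ℂ] g) := by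
  have hswap {f g : ℝⁿ → ℂ} (h : ConvolutionExists f g (ContinuousLinearMap.mul ℂ ℂ) ∧
      IsNice (f ⋆[ContinuousLinearMap.mul ℂ ℂ] g)) :
      ConvolutionExists g f (ContinuousLinearMap.mul ℂ ℂ) ∧
        IsNice (g ⋆[ContinuousLinearMap.mul ℂ ℂ] f) :=
    ⟨h.1.swap_mul, by rw [convolution_mul_comm]; exact h.2⟩
  refine hswap (hf.convolution_of_forall_buildingBlock fun α A b hA => hswap ?_)
  exact hg.convolution_of_forall_buildingBlock fun β A' b' hA' => buildingBlock_convolution hA hA'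

end Euclidean

/-- The convolution of two nice functions is nice. -/
theorem isNice_convolution (n : ℕ)
    (f₁ f₂ : EuclideanSpace ℝ (Fin n) → ℂ) (hf₁ : IsNice f₁) (hf₂ : IsNice f₂) :
    IsNice (fun x => ∫ y : EuclideanSpace ℝ (Fin n), f₁ y * f₂ (x - y)) :=
  (hf₁.convolution hf₂).2
end
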